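/- In the base case of the tree-crossing lemma: if H : [0,1]² → 𝔻² is continuous with H(0,t)=H(1,t)=1, H(s,0)=e^{2πis}, H(s,1)=1, and the separation condition H([0,1]×[0,t]) ∩ H([0,1]×[t,1]) = H([0,1]×{t}) holds for all t, and E ⊂ 𝔻² is a connected set (an embedded arc) meeting the interior of the disc, then some loop H_t meets E. -/

import Mathlib

open Complex Set

/-- Constancy: a continuous function on an interval whose exponential is
identically 1 is constant. -/
lemma eq_of_exp_eq_one {f : ℝ → ℂ} {a b : ℝ}
    (hf : ContinuousOn f (Set.Icc a b))
    (h1 : ∀ x ∈ Set.Icc a b, Complex.exp (f x) = 1)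
    {x y : ℝ} (hx : x ∈ Set.Icc a b) (hy : y ∈ Set.Icc a b) : f x = f y := by
  have imval : ∀ (k : ℤ), ((k : ℂ) * (2 * (Real.pi : ℂ) * Complex.I)).im
      = (k : ℝ) * (2 * Real.pi) := by
    intro k
    simp [Complex.mul_im, Complex.mul_re]
  obtain ⟨n, hn⟩ := Complex.exp_eq_one_iff.1 (h1 x hx)
  obtain ⟨m, hm⟩ := Complex.exp_eq_one_iff.1 (h1 y hy)
  have key : ∀ x' y' : ℝ, x' ∈ Set.Icc a b → y' ∈ Set.Icc a b →
      ∀ n' m' : ℤ, f x' = n' * (2 * (Real.pi:ℂ) * Complex.I) →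
      f y' = m' * (2 * (Real.pi:ℂ) * Complex.I) → n' < m' → False := by
    intro x' y' hx' hy' n' m' hn' hm' hlt
    set u : ℝ → ℝ := fun z => (f z).im with hu_def
    have hsub : Set.uIcc x' y' ⊆ Set.Icc a b := Set.uIcc_subset_Icc hx' hy'
    have hu : ContinuousOn u (Set.uIcc x' y') :=
      (Complex.continuous_im.comp_continuousOn (hf.mono hsub))
    have hux : u x' = (n' : ℝ) * (2 * Real.pi) := by rw [hu_def]; simp only; rw [hn', imval]
    have huy : u y' = (m' : ℝ) * (2 * Real.pi) := by rw [hu_def]; simp only; rw [hm', imval]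
    have hm1 : (n' : ℝ) + 1 ≤ (m' : ℝ) := by exact_mod_cast hlt
    have hπ : (0:ℝ) < Real.pi := Real.pi_pos
    have hv : (n' : ℝ) * (2 * Real.pi) + Real.pi ∈ Set.uIcc (u x') (u y') := by
      rw [hux, huy]
      refine Set.Icc_subset_uIcc ?_
      constructor
      · nlinarith
      · nlinarith
    obtain ⟨z, hz, hvz⟩ := intermediate_value_uIcc hu hv
    obtain ⟨k, hk⟩ := Complex.exp_eq_one_iff.1 (h1 z (hsub hz))
    have hkz : u z = (k : ℝ) * (2 * Real.pi) := by rw [hu_def]; simp only; rw [hk, imval]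
    have : (2 * k : ℝ) * Real.pi = (2 * n' + 1 : ℝ) * Real.pi := by
      rw [hkz] at hvz; nlinarith
    have h2 : (2 * k : ℝ) = (2 * n' + 1 : ℝ) := mul_right_cancel₀ hπ.ne' this
    have h3 : (2 * k : ℤ) = 2 * n' + 1 := by exact_mod_cast h2
    omega
  rcases lt_trichotomy n m with h | h | h
  · exact absurd (key x y hx hy n m hn hm h) (fun h => h)
  · rw [hn, hm, h]
  · exact absurd (key y x hy hx m n hm hn h) (fun h => h)

/-- Lifting lemma: a continuous nonvanishing function on a compact convex set
admits a continuous logarithm. -/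
lemma exists_continuous_log {K : ℝ × ℝ → ℂ} {R : Set (ℝ × ℝ)}
    (hRconv : Convex ℝ R) (hRcomp : IsCompact R) (hRne : R.Nonempty)
    (hK : ContinuousOn K R) (h0 : ∀ p ∈ R, K p ≠ 0) :
    ∃ L : ℝ × ℝ → ℂ, ContinuousOn L R ∧ ∀ p ∈ R, Complex.exp (L p) = K p := by
  obtain ⟨c, hc⟩ := hRne
  -- minimum of ‖K‖
  obtain ⟨p₀, hp₀, hmin⟩ := hRcomp.exists_isMinOn ⟨c, hc⟩ (hK.norm)
  set δ : ℝ := ‖K p₀‖ with hδ_def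
  have hδpos : 0 < δ := norm_pos_iff.2 (h0 p₀ hp₀)
  have hδle : ∀ p ∈ R, δ ≤ ‖K p‖ := fun p hp => hmin hp
  -- uniform continuity
  obtain ⟨η, hηpos, hη⟩ := (Metric.uniformContinuousOn_iff.1
    (hRcomp.uniformContinuousOn_of_continuous hK)) δ hδpos
  -- bound on diameter
  obtain ⟨D, hD⟩ := Metric.isBounded_iff.1 hRcomp.isBounded
  have hD0 : 0 ≤ D := le_trans dist_nonneg (hD hc hc)
  obtain ⟨n, hn⟩ := exists_nat_gt (max (D / η) 0)
  have hnpos : (0:ℝ) < n := lt_of_le_of_lt (le_max_right _ _) hn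
  have hn0 : (n:ℝ) ≠ 0 := hnpos.ne'
  set φ : ℕ → (ℝ × ℝ) → ℝ × ℝ := fun j p => c + ((j : ℝ) / n) • (p - c) with hφ_def
  have hφmem : ∀ j : ℕ, j ≤ n → ∀ p ∈ R, φ j p ∈ R := by
    intro j hj p hp
    have h1 : (0:ℝ) ≤ (j : ℝ) / n := by positivity
    have h2 : (j : ℝ) / n ≤ 1 := by
      rw [div_le_one hnpos]; exact_mod_cast hj
    have : φ j p = (1 - (j:ℝ)/n) • c + ((j:ℝ)/n) • p := by
      rw [hφ_def]; simp only; module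
    rw [this]
    exact hRconv hc hp (by linarith) h1 (by ring)
  have hφ0 : ∀ p, φ 0 p = c := by intro p; simp [hφ_def]
  have hφn : ∀ p, φ n p = p := by
    intro p; rw [hφ_def]; simp only [div_self hn0, one_smul]; abel
  have hφdist : ∀ (j : ℕ) (p : ℝ × ℝ), p ∈ R → dist (φ (j+1) p) (φ j p) < η := by
    intro j p hp
    have hdiff : φ (j+1) p - φ j p = ((1:ℝ)/n) • (p - c) := by
      rw [hφ_def]; simp only
      have : ((j+1 : ℕ) : ℝ) / n = (j:ℝ)/n + 1/n := by push_cast; ring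
      rw [this]; module
    rw [dist_eq_norm, hdiff, norm_smul]
    have h1 : ‖(1:ℝ)/n‖ = 1/n := by
      rw [Real.norm_eq_abs, abs_of_pos (by positivity)]
    rw [h1]
    have h2 : ‖p - c‖ ≤ D := by rw [← dist_eq_norm]; exact hD hp hc
    have h3 : D / η < n := lt_of_le_of_lt (le_max_left _ _) hn
    have h4 : D < n * η := by rwa [div_lt_iff₀ hηpos] at h3
    calc 1/(n:ℝ) * ‖p - c‖ ≤ 1/n * D := by
            apply mul_le_mul_of_nonneg_left h2 (by positivity)
      _ < η := by rw [div_mul_eq_mul_div, one_mul, div_lt_iff₀ hnpos]; linarith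
  -- ratio estimates
  have hratio : ∀ (j : ℕ), j + 1 ≤ n → ∀ p ∈ R,
      ‖K (φ (j+1) p) / K (φ j p) - 1‖ < 1 := by
    intro j hj p hp
    have hj' : j ≤ n := by omega
    have hmem1 := hφmem j hj' p hp
    have hmem2 := hφmem (j+1) hj p hp
    have hne1 := h0 _ hmem1
    have hKd : dist (K (φ (j+1) p)) (K (φ j p)) < δ :=
      hη _ hmem2 _ hmem1 (hφdist j p hp)
    have : K (φ (j+1) p) / K (φ j p) - 1 = (K (φ (j+1) p) - K (φ j p)) / K (φ j p) := by
      field_simp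
    rw [this, norm_div, div_lt_one (norm_pos_iff.2 hne1)]
    calc ‖K (φ (j+1) p) - K (φ j p)‖ = dist (K (φ (j+1) p)) (K (φ j p)) := (dist_eq_norm _ _).symm
      _ < δ := hKd
      _ ≤ ‖K (φ j p)‖ := hδle _ hmem1
  have hslit : ∀ (j : ℕ), j + 1 ≤ n → ∀ p ∈ R,
      K (φ (j+1) p) / K (φ j p) ∈ Complex.slitPlane := by
    intro j hj p hp
    have := Complex.mem_slitPlane_of_norm_lt_one (hratio j hj p hp)
    simpa using this
  -- define the lift
  set L : ℝ × ℝ → ℂ := fun p => Complex.log (K c) +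
    ∑ j ∈ Finset.range n, Complex.log (K (φ (j+1) p) / K (φ j p)) with hL_def
  refine ⟨L, ?_, ?_⟩
  · -- continuity
    apply ContinuousOn.add continuousOn_const
    apply continuousOn_finset_sum
    intro j hj
    have hjn : j + 1 ≤ n := Finset.mem_range.1 hj
    have hφcont : ∀ i : ℕ, Continuous (φ i) := by
      intro i
      apply Continuous.add continuous_const
      exact ((continuous_id : Continuous (id : ℝ × ℝ → ℝ × ℝ)).sub continuous_const).const_smul ((i : ℝ) / n)
    have hc1 : ContinuousOn (fun p => K (φ (j+1) p)) R :=
      hK.comp (hφcont (j+1)).continuousOn (fun p hp => hφmem (j+1) hjn p hp)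
    have hc2 : ContinuousOn (fun p => K (φ j p)) R :=
      hK.comp (hφcont j).continuousOn (fun p hp => hφmem j (by omega) p hp)
    exact (hc1.div hc2 (fun p hp => h0 _ (hφmem j (by omega) p hp))).clog
      (fun p hp => hslit j hjn p hp)
  · -- exp of the lift
    intro p hp
    have hind : ∀ m : ℕ, m ≤ n → Complex.exp (Complex.log (K c) +
        ∑ j ∈ Finset.range m, Complex.log (K (φ (j+1) p) / K (φ j p))) = K (φ m p) := by
      intro m
      induction m with
      | zero =>
        intro _
        simp [hφ0, Complex.exp_log (h0 c hc)]
      | succ m ih =>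
        intro hm
        have hm' : m ≤ n := by omega
        rw [Finset.sum_range_succ, ← add_assoc, Complex.exp_add, ih hm',
          Complex.exp_log]
        · rw [mul_comm]; exact div_mul_cancel₀ _ (h0 _ (hφmem m hm' p hp))
        · exact div_ne_zero (h0 _ (hφmem (m+1) hm p hp)) (h0 _ (hφmem m hm' p hp))
    have := hind n le_rfl
    rwa [hφn] at this


/-- The hypotheses on the contracting homotopy `H`: `H` is a continuous map from
`[0,1]²` to the closed unit disc `𝔻² ⊆ ℂ` with `H(0,t) = H(1,t) = 1` for all `t`,
`H(s,0) = e^{2πis}`, `H(s,1) = 1` for all `s`, and the separation condition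
`H([0,1]×[0,t]) ∩ H([0,1]×[t,1]) = H([0,1]×{t})` for all `t`. -/
structure IsContractingHomotopy (H : ℝ × ℝ → ℂ) : Prop where
  cont : ContinuousOn H (Set.Icc 0 1 ×ˢ Set.Icc 0 1)
  maps_to_disc : ∀ p ∈ Set.Icc (0:ℝ) 1 ×ˢ Set.Icc (0:ℝ) 1,
    H p ∈ Metric.closedBall (0 : ℂ) 1
  left : ∀ t ∈ Set.Icc (0:ℝ) 1, H (0, t) = 1
  right : ∀ t ∈ Set.Icc (0:ℝ) 1, H (1, t) = 1
  bottom : ∀ s ∈ Set.Icc (0:ℝ) 1, H (s, 0) = Complex.exp (2 * Real.pi * Complex.I * s)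
  top : ∀ s ∈ Set.Icc (0:ℝ) 1, H (s, 1) = 1
  separation : ∀ t ∈ Set.Icc (0:ℝ) 1,
    H '' (Set.Icc 0 1 ×ˢ Set.Icc 0 t) ∩ H '' (Set.Icc 0 1 ×ˢ Set.Icc t 1)
      = H '' (Set.Icc 0 1 ×ˢ {t})

lemma homotopy_covers (H : ℝ × ℝ → ℂ) (hH : IsContractingHomotopy H)
    (e : ℂ) (he : e ∈ Metric.ball (0:ℂ) 1) :
    ∃ p ∈ Set.Icc (0:ℝ) 1 ×ˢ Set.Icc (0:ℝ) 1, H p = e := by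
  by_contra hcon
  push_neg at hcon
  have he' : ‖e‖ < 1 := mem_ball_zero_iff.1 he
  set R : Set (ℝ × ℝ) := Set.Icc (0:ℝ) 1 ×ˢ Set.Icc (-1:ℝ) 1 with hR_def
  set K : ℝ × ℝ → ℂ := fun p => H (p.1, max p.2 0) - ((1 + min p.2 0 : ℝ) : ℂ) * e
    with hK_def
  have hnormexp : ∀ s : ℝ, ‖Complex.exp (2 * Real.pi * Complex.I * s)‖ = 1 := by
    intro s
    have h : (2 * (Real.pi:ℂ) * Complex.I * (s:ℂ)) = ((2 * Real.pi * s : ℝ) : ℂ) * Complex.I := by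
      push_cast; ring
    rw [h, Complex.norm_exp]
    simp
  have hmax : ∀ p ∈ R, (p.1, max p.2 0) ∈ Set.Icc (0:ℝ) 1 ×ˢ Set.Icc (0:ℝ) 1 := by
    rintro p ⟨hp1, hp2⟩
    exact ⟨hp1, ⟨le_max_right _ _, max_le hp2.2 zero_le_one⟩⟩
  have hKcont : ContinuousOn K R := by
    apply ContinuousOn.sub
    · exact hH.cont.comp
        ((continuous_fst.prodMk (continuous_snd.max continuous_const)).continuousOn) hmax
    · exact ((Complex.continuous_ofReal.comp
        (continuous_const.add (continuous_snd.min continuous_const))).mul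
        continuous_const).continuousOn
  have hK0 : ∀ p ∈ R, K p ≠ 0 := by
    rintro p ⟨hp1, hp2⟩
    rcases le_total p.2 0 with h | h
    · rw [hK_def]
      simp only [max_eq_right h, min_eq_left h]
      rw [hH.bottom p.1 hp1]
      apply sub_ne_zero.2
      intro heq
      have h1 : ‖((1 + p.2 : ℝ) : ℂ) * e‖ < 1 := by
        rw [norm_mul, Complex.norm_real, Real.norm_eq_abs,
          _root_.abs_of_nonneg (by linarith [hp2.1])]
        calc (1 + p.2) * ‖e‖ ≤ 1 * ‖e‖ := by
              apply mul_le_mul_of_nonneg_right (by linarith) (norm_nonneg _)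
          _ < 1 := by rwa [one_mul]
      rw [← heq, hnormexp] at h1
      exact lt_irrefl _ h1
    · have hmem : (p.1, p.2) ∈ Set.Icc (0:ℝ) 1 ×ˢ Set.Icc (0:ℝ) 1 := ⟨hp1, ⟨h, hp2.2⟩⟩
      rw [hK_def]
      simp only [max_eq_left h, min_eq_right h]
      have := sub_ne_zero.2 (hcon (p.1, p.2) hmem)
      norm_num
      simpa using this
  have hRconv : Convex ℝ R := (convex_Icc (0:ℝ) 1).prod (convex_Icc (-1:ℝ) 1)
  have hRcomp : IsCompact R := isCompact_Icc.prod isCompact_Icc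
  have hRne : R.Nonempty := ⟨(0, 0), ⟨⟨le_refl 0, zero_le_one⟩, ⟨by norm_num, zero_le_one⟩⟩⟩
  obtain ⟨L, hLcont, hLexp⟩ := exists_continuous_log hRconv hRcomp hRne hKcont hK0
  -- membership helpers
  have hmem01 : ∀ t ∈ Set.Icc (-1:ℝ) 1, ((0:ℝ), t) ∈ R ∧ ((1:ℝ), t) ∈ R := by
    intro t ht
    exact ⟨⟨⟨le_refl 0, zero_le_one⟩, ht⟩, ⟨⟨zero_le_one, le_refl 1⟩, ht⟩⟩
  have hmems : ∀ s ∈ Set.Icc (0:ℝ) 1, (s, (1:ℝ)) ∈ R ∧ (s, (-1:ℝ)) ∈ R := by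
    intro s hs
    exact ⟨⟨hs, ⟨by norm_num, le_refl 1⟩⟩, ⟨hs, ⟨le_refl _, by norm_num⟩⟩⟩
  -- a(t) = L(1,t) - L(0,t)
  set a : ℝ → ℂ := fun t => L (1, t) - L (0, t) with ha_def
  have haexp : ∀ t ∈ Set.Icc (-1:ℝ) 1, Complex.exp (a t) = 1 := by
    intro t ht
    obtain ⟨h0t, h1t⟩ := hmem01 t ht
    have hKeq : K (1, t) = K (0, t) := by
      rw [hK_def]
      simp only
      rw [hH.right _ (hmax _ h1t).2, hH.left _ (hmax _ h0t).2]
    rw [ha_def]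
    simp only
    rw [Complex.exp_sub, hLexp _ h1t, hLexp _ h0t, hKeq, div_self (hK0 _ h0t)]
  have hacont : ContinuousOn a (Set.Icc (-1:ℝ) 1) := by
    apply ContinuousOn.sub
    · exact hLcont.comp ((continuous_const.prodMk continuous_id).continuousOn)
        (fun t ht => (hmem01 t ht).2)
    · exact hLcont.comp ((continuous_const.prodMk continuous_id).continuousOn)
        (fun t ht => (hmem01 t ht).1)
  have haconst : a (-1) = a 1 :=
    eq_of_exp_eq_one hacont haexp ⟨le_refl _, by norm_num⟩ ⟨by norm_num, le_refl _⟩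
  -- a 1 = 0 via b
  have ha1 : a 1 = 0 := by
    set b : ℝ → ℂ := fun s => L (s, 1) - L (0, 1) with hb_def
    have hbexp : ∀ s ∈ Set.Icc (0:ℝ) 1, Complex.exp (b s) = 1 := by
      intro s hs
      have hKeq : K (s, 1) = K (0, 1) := by
        rw [hK_def]
        simp only
        rw [max_eq_left zero_le_one, hH.top s hs, hH.top 0 ⟨le_refl 0, zero_le_one⟩]
      rw [hb_def]
      simp only
      rw [Complex.exp_sub, hLexp _ (hmems s hs).1,
        hLexp _ (hmems 0 ⟨le_refl 0, zero_le_one⟩).1, hKeq,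
        div_self (hK0 _ (hmems 0 ⟨le_refl 0, zero_le_one⟩).1)]
    have hbcont : ContinuousOn b (Set.Icc (0:ℝ) 1) := by
      apply ContinuousOn.sub
      · exact hLcont.comp ((continuous_id.prodMk continuous_const).continuousOn)
          (fun s hs => (hmems s hs).1)
      · exact continuousOn_const
    have := eq_of_exp_eq_one hbcont hbexp ⟨zero_le_one, le_refl 1⟩ ⟨le_refl 0, zero_le_one⟩
    have hb1 : b 1 = 0 := by rw [this, hb_def]; simp
    rw [ha_def]
    simp only
    rw [hb_def] at hb1
    simp only at hb1
    rw [sub_eq_zero] at hb1 ⊢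
    exact hb1
  -- a (-1) = 2πi via c
  have ham1 : a (-1) = 2 * Real.pi * Complex.I := by
    set c : ℝ → ℂ := fun s => L (s, -1) - 2 * Real.pi * Complex.I * s with hc_def
    have hKsm1 : ∀ s ∈ Set.Icc (0:ℝ) 1, K (s, -1) = Complex.exp (2 * Real.pi * Complex.I * s) := by
      intro s hs
      rw [hK_def]
      simp only
      rw [max_eq_right (by norm_num : (-1:ℝ) ≤ 0), min_eq_left (by norm_num : (-1:ℝ) ≤ 0),
        hH.bottom s hs]
      push_cast
      ring
    have hcexp : ∀ s ∈ Set.Icc (0:ℝ) 1, Complex.exp (c s) = 1 := by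
      intro s hs
      rw [hc_def]
      simp only
      rw [Complex.exp_sub, hLexp _ (hmems s hs).2, hKsm1 s hs,
        div_self (Complex.exp_ne_zero _)]
    have hccont : ContinuousOn c (Set.Icc (0:ℝ) 1) := by
      apply ContinuousOn.sub
      · exact hLcont.comp ((continuous_id.prodMk continuous_const).continuousOn)
          (fun s hs => (hmems s hs).2)
      · exact (continuous_const.mul Complex.continuous_ofReal).continuousOn
    have hc10 := eq_of_exp_eq_one hccont hcexp ⟨zero_le_one, le_refl 1⟩ ⟨le_refl 0, zero_le_one⟩
    rw [hc_def] at hc10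
    simp only at hc10
    push_cast at hc10
    rw [ha_def]
    simp only
    rw [mul_one, mul_zero, sub_zero] at hc10
    rw [sub_eq_iff_eq_add] at hc10
    rw [hc10]
    ring
  rw [ham1, ha1] at haconst
  simp [Complex.ext_iff, Real.pi_ne_zero] at haconst

/-- Base case of the tree-crossing lemma: if `H` is a contracting homotopy of the boundary
circle of the closed unit disc `𝔻²` (with the separation condition), and `E ⊆ 𝔻²` is an
embedded arc meeting the interior of the disc, then some loop `H_t` meets `E`. -/
theorem homotopy_meets_arc (H : ℝ × ℝ → ℂ) (hH : IsContractingHomotopy H)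
    (E : Set ℂ) (g : ℝ → ℂ) (hg_cont : ContinuousOn g (Set.Icc 0 1))
    (hg_inj : Set.InjOn g (Set.Icc 0 1)) (hg_img : g '' Set.Icc 0 1 = E)
    (hE_disc : E ⊆ Metric.closedBall (0 : ℂ) 1)
    (hE_int : (E ∩ Metric.ball (0 : ℂ) 1).Nonempty) :
    ∃ t ∈ Set.Icc (0:ℝ) 1, (H '' (Set.Icc 0 1 ×ˢ {t}) ∩ E).Nonempty := by
  obtain ⟨e, heE, heB⟩ := hE_int
  obtain ⟨p, hp, hpe⟩ := homotopy_covers H hH e heB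
  refine ⟨p.2, hp.2, H p, ⟨⟨p, ⟨hp.1, rfl⟩, rfl⟩, ?_⟩⟩
  rw [hpe]; exact heE
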